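/- arXiv:1010.4063 — 3 statements merged into one kernel-verified Lean document; each statement's English description precedes it below -/
import Mathlib

section
/- For every integer r ≥ 2 and every α with 0 < α ≤ 1/(2r), the sequence p_n^{r,1}, n = 0, 1, 2, …, is strictly increasing. -/
open Finset Filter Topology

/-- `p α r d n = P(S_{n+r} ≥ S'_n + d)` for independent binomials with success
probability `α`, given by its explicit combinatorial formula. -/
noncomputable def competeProb (α : ℝ) (r d n : ℕ) : ℝ :=
  ∑ i ∈ Finset.range (n + 1), ∑ j ∈ Finset.Icc (i + d) (n + r),
    ((n + r).choose j : ℝ) * (n.choose i : ℝ) * α ^ (i + j) * (1 - α) ^ (2 * n + r - i - j)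

/-!
Write `A = αX + (1 - α)` for the generating polynomial of one trial. Then
`F_n = A^(n+r) · X^n A(1/X)^n` is the generating polynomial of `S_{n+r} - S'_n + n`, so `p_n`
is the sum of the coefficients of `F_n` beyond `X^n`. Since `A(X) · X A(1/X) = X + α(1-α)(1-X)²`,
passing from `F_n` to `F_{n+1}` gives `p_{n+1} - p_n = α(1-α)(f_n - f_{n+1})`, where `f_k` is
the `k`-th coefficient of `F_n`.

With `⟨·,·⟩` the coefficientwise inner product of polynomials, `q = A^n`, `d = (1-X)q` and
`A^r = ∑ u_j X^j`, this difference is `∑ u_j ⟨X^j q, d⟩`. The inner product is invariant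
under shifts, so `⟨X^l d, d⟩ ≤ ⟨d, d⟩ = 2⟨q, d⟩`, strictly for `l ≥ 1`, and summing these over
`l < j` gives `⟨X^j q, d⟩ ≥ -(2j-1)⟨q, d⟩`, strictly for `j ≥ 2`. Since
`∑ (2j-1) u_j = 2rα - 1 ≤ 0`, the difference is positive.
-/

open Polynomial

namespace Polynomial

variable {R : Type*} [CommRing R]

theorem sum_support_coeff_mul_eq_sum_range {p : R[X]} {N : ℕ} (hp : p.natDegree < N)
    (f : ℕ → R) : ∑ i ∈ p.support, p.coeff i * f i = ∑ i ∈ range N, p.coeff i * f i :=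
  sum_subset (supp_subset_range hp) fun i _ hi => by rw [notMem_support_iff.1 hi, zero_mul]

noncomputable def coeffDot : R[X] →ₗ[R] R[X] →ₗ[R] R :=
  LinearMap.mk₂ R (fun p q => ∑ i ∈ p.support, p.coeff i * q.coeff i)
    (fun p p' q => by
      have hN := Nat.lt_succ_self (max p.natDegree p'.natDegree)
      rw [sum_support_coeff_mul_eq_sum_range ((natDegree_add_le p p').trans_lt hN),
        sum_support_coeff_mul_eq_sum_range ((le_max_left _ _).trans_lt hN),
        sum_support_coeff_mul_eq_sum_range ((le_max_right _ _).trans_lt hN)]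
      simp only [coeff_add, add_mul, sum_add_distrib])
    (fun a p q => by
      rw [sum_support_coeff_mul_eq_sum_range
          ((natDegree_smul_le a p).trans_lt p.natDegree.lt_succ_self),
        sum_support_coeff_mul_eq_sum_range p.natDegree.lt_succ_self, smul_eq_mul, mul_sum]
      simp only [coeff_smul, smul_eq_mul, mul_assoc])
    (fun p q q' => by simp only [coeff_add, mul_add, sum_add_distrib])
    (fun a p q => by simp only [coeff_smul, smul_eq_mul, mul_sum, mul_left_comm])

theorem coeffDot_eq_sum_range {p : R[X]} {N : ℕ} (hp : p.natDegree < N) (q : R[X]) :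
    coeffDot p q = ∑ i ∈ range N, p.coeff i * q.coeff i :=
  sum_support_coeff_mul_eq_sum_range hp _

theorem coeffDot_comm (p q : R[X]) : coeffDot p q = coeffDot q p := by
  have hN := Nat.lt_succ_self (max p.natDegree q.natDegree)
  rw [coeffDot_eq_sum_range ((le_max_left _ _).trans_lt hN),
    coeffDot_eq_sum_range ((le_max_right _ _).trans_lt hN)]
  simp only [mul_comm]

theorem coeffDot_X_pow_mul (s : ℕ) (p q : R[X]) :
    coeffDot (X ^ s * p) (X ^ s * q) = coeffDot p q := by
  have hdeg : (X ^ s * p).natDegree < s + (p.natDegree + 1) :=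
    natDegree_mul_le.trans_lt (by have := natDegree_X_pow_le (R := R) s; omega)
  rw [coeffDot_eq_sum_range p.natDegree.lt_succ_self, coeffDot_eq_sum_range hdeg,
    sum_range_add, sum_eq_zero fun i hi => by
      rw [coeff_X_pow_mul', if_neg (by simpa using hi), zero_mul]]
  simp only [zero_add, add_comm s, coeff_X_pow_mul]

theorem coeffDot_sub_X_pow_mul_self (s : ℕ) (p : R[X]) :
    coeffDot (p - X ^ s * p) (p - X ^ s * p) = 2 * (coeffDot p p - coeffDot (X ^ s * p) p) := by
  simp only [map_sub, LinearMap.sub_apply, coeffDot_X_pow_mul]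
  rw [coeffDot_comm p (X ^ s * p)]
  ring

theorem coeffDot_one_sub_X_mul_self (q : R[X]) :
    coeffDot ((1 - X) * q) ((1 - X) * q) = 2 * coeffDot q ((1 - X) * q) := by
  have h := coeffDot_sub_X_pow_mul_self 1 q
  rw [pow_one, ← one_sub_mul] at h
  rw [h, sub_mul, one_mul, map_sub, coeffDot_comm q (X * q)]

theorem coeffDot_X_pow_mul_one_sub_X_mul (q : R[X]) (j : ℕ) :
    (2 * j - 1) * coeffDot q ((1 - X) * q) + coeffDot (X ^ j * q) ((1 - X) * q) =
      ∑ l ∈ range j, (coeffDot ((1 - X) * q) ((1 - X) * q) -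
        coeffDot (X ^ l * ((1 - X) * q)) ((1 - X) * q)) := by
  induction j with
  | zero => simp
  | succ j ih =>
    have hshift : X ^ (j + 1) * q = X ^ j * q - X ^ j * ((1 - X) * q) := by ring
    rw [sum_range_succ, ← ih, hshift, map_sub, LinearMap.sub_apply,
      coeffDot_one_sub_X_mul_self]
    push_cast
    ring

theorem coeffDot_mul_left (p q d : R[X]) :
    coeffDot (p * q) d = ∑ j ∈ range (p.natDegree + 1), p.coeff j * coeffDot (X ^ j * q) d := by
  conv_lhs => rw [p.as_sum_range_C_mul_X_pow]
  simp only [sum_mul, map_sum, LinearMap.sum_apply, ← smul_eq_C_mul, smul_mul_assoc, map_smul,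
    LinearMap.smul_apply, smul_eq_mul]

theorem reflect_eq_sum_range {p : R[X]} {N : ℕ} (hp : p.natDegree ≤ N) :
    reflect N p = ∑ i ∈ range (N + 1), C (p.coeff i) * X ^ (N - i) := by
  ext k
  simp only [coeff_reflect, finsetSum_coeff, coeff_C_mul_X_pow]
  rcases le_or_gt k N with hk | hk
  · rw [revAt_le hk, sum_eq_single (N - k) (fun i hi hik => if_neg (by simp at hi; omega))
      (by simp), if_pos (by omega)]
  · rw [← revAtFun_eq, revAtFun, if_neg (by omega),
      coeff_eq_zero_of_natDegree_lt (hp.trans_lt hk)]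
    exact (sum_eq_zero fun i hi => if_neg (by omega)).symm

theorem coeff_mul_reflect_add {q : R[X]} {N : ℕ} (hq : q.natDegree ≤ N) (p : R[X]) (t : ℕ) :
    (p * reflect N q).coeff (N + t) = coeffDot p (X ^ t * q) := by
  have hdeg : (X ^ t * q).natDegree < t + (N + 1) :=
    natDegree_mul_le.trans_lt (by have := natDegree_X_pow_le (R := R) t; omega)
  rw [coeffDot_comm, coeffDot_eq_sum_range hdeg, sum_range_add, sum_eq_zero fun i hi => by
      rw [coeff_X_pow_mul', if_neg (by simpa using hi), zero_mul], zero_add,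
    reflect_eq_sum_range hq, mul_sum, finsetSum_coeff]
  refine sum_congr rfl fun i hi => ?_
  rw [mul_left_comm, coeff_C_mul, coeff_mul_X_pow', if_pos (by simp at hi; omega), add_comm t,
    coeff_X_pow_mul, show N + t - (N - i) = i + t by simp at hi; omega]

-- `∑_{k > m} p_k`, written through `eval 1` so that it is linear without any degree bound.
noncomputable def tailSum (m : ℕ) : R[X] →ₗ[R] R :=
  leval 1 - ∑ k ∈ range (m + 1), lcoeff R k

theorem tailSum_apply (m : ℕ) (p : R[X]) :
    tailSum m p = p.eval 1 - ∑ k ∈ range (m + 1), p.coeff k := by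
  simp [tailSum]

theorem tailSum_eq_sum_Icc {p : R[X]} {m N : ℕ} (hp : p.natDegree ≤ N) (hm : m ≤ N) :
    tailSum m p = ∑ k ∈ Icc (m + 1) N, p.coeff k := by
  rw [tailSum_apply, eval_eq_sum_range' (Nat.lt_succ_of_le hp), ← Ico_add_one_right_eq_Icc,
    sum_Ico_eq_sub _ (by omega)]
  simp

theorem tailSum_X_pow_mul (m s : ℕ) (p : R[X]) : tailSum (m + s) (X ^ s * p) = tailSum m p := by
  rw [tailSum_apply, tailSum_apply, show m + s + 1 = s + (m + 1) by ring, sum_range_add,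
    sum_eq_zero fun k hk => by rw [coeff_X_pow_mul', if_neg (by simpa using hk)]]
  simp [add_comm s, coeff_X_pow_mul]

theorem tailSum_one_sub_X_mul (m : ℕ) (p : R[X]) : tailSum m ((1 - X) * p) = -p.coeff m := by
  rw [tailSum_apply, sub_mul, one_mul]
  simp only [eval_sub, eval_mul, eval_X, one_mul, sub_self, coeff_sub, sum_sub_distrib,
    sum_range_succ' (fun k => (X * p).coeff k), coeff_X_mul, coeff_X_mul_zero, add_zero,
    sum_range_succ (fun k => p.coeff k)]
  ring

theorem eval_one_derivative (p : R[X]) :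
    (derivative p).eval 1 = ∑ j ∈ range (p.natDegree + 1), j * p.coeff j := by
  rw [derivative_eval, sum_over_range _ fun n => by simp]
  simp [mul_comm]

section Ordered

variable {K : Type*} [CommRing K] [LinearOrder K] [IsStrictOrderedRing K]

theorem coeffDot_self_nonneg (p : K[X]) : 0 ≤ coeffDot p p := by
  rw [coeffDot_eq_sum_range p.natDegree.lt_succ_self]
  exact sum_nonneg fun i _ => mul_self_nonneg _

theorem coeffDot_self_pos {p : K[X]} (hp : p ≠ 0) : 0 < coeffDot p p := by
  rw [coeffDot_eq_sum_range p.natDegree.lt_succ_self]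
  exact sum_pos' (fun i _ => mul_self_nonneg _)
    ⟨_, self_mem_range_succ _, mul_self_pos.2 (leadingCoeff_ne_zero.2 hp)⟩

theorem coeffDot_X_pow_mul_self_le (s : ℕ) (p : K[X]) :
    coeffDot (X ^ s * p) p ≤ coeffDot p p := by
  have h := coeffDot_sub_X_pow_mul_self s p
  have := coeffDot_self_nonneg (p - X ^ s * p)
  linarith

theorem coeffDot_X_pow_mul_self_lt {s : ℕ} (hs : s ≠ 0) {p : K[X]} (hp : p ≠ 0) :
    coeffDot (X ^ s * p) p < coeffDot p p := by
  have hne : p - X ^ s * p ≠ 0 := by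
    rw [← one_sub_mul, ← neg_sub, ← C_1]
    exact mul_ne_zero (neg_ne_zero.2 (X_pow_sub_C_ne_zero (Nat.pos_of_ne_zero hs) 1)) hp
  have h := coeffDot_sub_X_pow_mul_self s p
  have := coeffDot_self_pos hne
  linarith

theorem neg_mul_le_coeffDot_X_pow_mul (q : K[X]) (j : ℕ) :
    -((2 * j - 1) * coeffDot q ((1 - X) * q)) ≤ coeffDot (X ^ j * q) ((1 - X) * q) := by
  have h := coeffDot_X_pow_mul_one_sub_X_mul q j
  have := sum_nonneg fun l (_ : l ∈ range j) => sub_nonneg.2 <|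
    coeffDot_X_pow_mul_self_le l ((1 - X) * q)
  linarith

theorem neg_mul_lt_coeffDot_X_pow_mul {q : K[X]} (hq : q ≠ 0) {j : ℕ} (hj : 2 ≤ j) :
    -((2 * j - 1) * coeffDot q ((1 - X) * q)) < coeffDot (X ^ j * q) ((1 - X) * q) := by
  have hd : (1 - X) * q ≠ 0 := by
    rw [← neg_sub, ← C_1]
    exact mul_ne_zero (neg_ne_zero.2 (X_sub_C_ne_zero 1)) hq
  have h := coeffDot_X_pow_mul_one_sub_X_mul q j
  have := sum_pos' (fun l (_ : l ∈ range j) => sub_nonneg.2 <|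
    coeffDot_X_pow_mul_self_le l ((1 - X) * q))
    ⟨1, mem_range.2 hj, sub_pos.2 (coeffDot_X_pow_mul_self_lt one_ne_zero hd)⟩
  linarith

theorem coeffDot_mul_one_sub_X_mul_pos {p q : K[X]} (hp : ∀ j, 0 ≤ p.coeff j)
    (hdeg : 2 ≤ p.natDegree) (hmean : 2 * (derivative p).eval 1 ≤ p.eval 1) (hq : q ≠ 0) :
    0 < coeffDot (p * q) ((1 - X) * q) := by
  have hs : 0 ≤ coeffDot q ((1 - X) * q) := by
    have := coeffDot_one_sub_X_mul_self q
    have := coeffDot_self_nonneg ((1 - X) * q)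
    linarith
  have hweights : ∑ j ∈ range (p.natDegree + 1), (2 * j - 1) * p.coeff j ≤ 0 := by
    rw [eval_one_derivative, eval_eq_sum_range, mul_sum] at hmean
    simp only [one_pow, mul_one] at hmean
    simp only [sub_mul, one_mul, sum_sub_distrib, mul_assoc]
    linarith
  have hlead : 0 < p.coeff p.natDegree :=
    (hp _).lt_of_ne' (leadingCoeff_ne_zero.2 (ne_zero_of_natDegree_gt hdeg))
  rw [coeffDot_mul_left]
  calc (0 : K) ≤ -(∑ j ∈ range (p.natDegree + 1), (2 * j - 1) * p.coeff j) *
        coeffDot q ((1 - X) * q) := mul_nonneg (neg_nonneg.2 hweights) hs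
    _ = ∑ j ∈ range (p.natDegree + 1),
          p.coeff j * -((2 * j - 1) * coeffDot q ((1 - X) * q)) := by
      rw [neg_mul, sum_mul, ← sum_neg_distrib]
      exact sum_congr rfl fun j _ => by ring
    _ < _ := sum_lt_sum (fun j _ => mul_le_mul_of_nonneg_left
        (neg_mul_le_coeffDot_X_pow_mul q j) (hp j))
      ⟨_, self_mem_range_succ _,
        mul_lt_mul_of_pos_left (neg_mul_lt_coeffDot_X_pow_mul hq hdeg) hlead⟩

end Ordered

end Polynomial

section CoinPoly

variable {R : Type*} [CommRing R]

noncomputable def coinPoly (α : R) : R[X] := C α * X + C (1 - α)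

theorem coeff_coinPoly_pow (α : R) (m j : ℕ) :
    (coinPoly α ^ m).coeff j = m.choose j * α ^ j * (1 - α) ^ (m - j) := by
  rw [coinPoly, add_pow, finsetSum_coeff]
  simp only [mul_pow, ← C_pow, ← C_eq_natCast, mul_right_comm _ (X ^ _), ← C_mul,
    coeff_C_mul_X_pow]
  rw [sum_ite_eq]
  split_ifs with hj
  · ring
  · rw [Nat.choose_eq_zero_of_lt (by simpa using hj), Nat.cast_zero, zero_mul, zero_mul]

theorem eval_one_coinPoly (α : R) : (coinPoly α).eval 1 = 1 := by
  simp [coinPoly]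

theorem derivative_coinPoly (α : R) : derivative (coinPoly α) = C α := by
  simp [coinPoly]

theorem natDegree_coinPoly_pow_le (α : R) (m : ℕ) : (coinPoly α ^ m).natDegree ≤ m :=
  (natDegree_pow_le_of_le m natDegree_linear_le).trans_eq (mul_one m)

theorem coinPoly_mul_reflect_one (α : R) :
    coinPoly α * reflect 1 (coinPoly α) = X + C (α * (1 - α)) * (1 - X) ^ 2 := by
  have : reflect 1 (coinPoly α) = C α + C (1 - α) * X := by
    simp [coinPoly, reflect_add, reflect_C, sub_mul]
  rw [this, coinPoly]
  simp only [map_mul, map_sub, map_one]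
  ring

end CoinPoly

noncomputable def competePoly (α : ℝ) (r n : ℕ) : ℝ[X] :=
  coinPoly α ^ (n + r) * reflect n (coinPoly α ^ n)

theorem competeProb_eq_tailSum (α : ℝ) (r n : ℕ) :
    competeProb α r 1 n = tailSum n (competePoly α r n) := by
  rw [competePoly, reflect_eq_sum_range (natDegree_coinPoly_pow_le α n), mul_sum, map_sum,
    competeProb]
  refine sum_congr rfl fun i hi => ?_
  have hi : i ≤ n := Nat.lt_succ_iff.1 (mem_range.1 hi)
  have hshift := tailSum_X_pow_mul i (n - i) (coinPoly α ^ (n + r))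
  rw [Nat.add_sub_cancel' hi] at hshift
  have hterm : coinPoly α ^ (n + r) * (C ((coinPoly α ^ n).coeff i) * X ^ (n - i)) =
      (coinPoly α ^ n).coeff i • (X ^ (n - i) * coinPoly α ^ (n + r)) := by
    rw [smul_eq_C_mul]; ring
  rw [hterm, map_smul, smul_eq_mul, hshift,
    tailSum_eq_sum_Icc (natDegree_coinPoly_pow_le α _) (by omega), mul_sum]
  refine sum_congr rfl fun j hj => ?_
  have hj : j ≤ n + r := (mem_Icc.1 hj).2
  rw [coeff_coinPoly_pow, coeff_coinPoly_pow,
    show 2 * n + r - i - j = (n - i) + (n + r - j) by omega, pow_add, pow_add]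
  ring

theorem competePoly_succ (α : ℝ) (r n : ℕ) :
    competePoly α r (n + 1) =
      X * competePoly α r n + C (α * (1 - α)) * ((1 - X) * ((1 - X) * competePoly α r n)) := by
  have hreflect : reflect (n + 1) (coinPoly α ^ (n + 1)) =
      reflect 1 (coinPoly α) * reflect n (coinPoly α ^ n) := by
    rw [pow_succ', add_comm n 1]
    exact reflect_mul _ _ natDegree_linear_le (natDegree_coinPoly_pow_le α n)
  rw [competePoly, competePoly, hreflect]
  calc coinPoly α ^ (n + 1 + r) * (reflect 1 (coinPoly α) * reflect n (coinPoly α ^ n))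
      = coinPoly α * reflect 1 (coinPoly α) *
          (coinPoly α ^ (n + r) * reflect n (coinPoly α ^ n)) := by ring
    _ = _ := by rw [coinPoly_mul_reflect_one]; ring

theorem competeProb_succ_sub (α : ℝ) (r n : ℕ) :
    competeProb α r 1 (n + 1) - competeProb α r 1 n =
      α * (1 - α) * ((competePoly α r n).coeff n - (competePoly α r n).coeff (n + 1)) := by
  have hshift := tailSum_X_pow_mul n 1 (competePoly α r n)
  rw [pow_one] at hshift
  rw [competeProb_eq_tailSum, competeProb_eq_tailSum, competePoly_succ, map_add, hshift,
    ← smul_eq_C_mul, map_smul, tailSum_one_sub_X_mul, sub_mul, one_mul, coeff_sub, coeff_X_mul,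
    smul_eq_mul]
  ring

theorem coeff_competePoly_sub (α : ℝ) (r n : ℕ) :
    (competePoly α r n).coeff n - (competePoly α r n).coeff (n + 1) =
      coeffDot (coinPoly α ^ r * coinPoly α ^ n) ((1 - X) * coinPoly α ^ n) := by
  have h0 := coeff_mul_reflect_add (natDegree_coinPoly_pow_le α n) (coinPoly α ^ (n + r)) 0
  have h1 := coeff_mul_reflect_add (natDegree_coinPoly_pow_le α n) (coinPoly α ^ (n + r)) 1
  rw [add_zero, pow_zero, one_mul] at h0
  rw [pow_one] at h1
  rw [competePoly, h0, h1, ← map_sub, sub_mul, one_mul, pow_add, mul_comm (coinPoly α ^ n)]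

theorem coeffDot_coinPoly_pow_pos {α : ℝ} (hα0 : 0 < α) (hα1 : α ≤ 1) {r : ℕ} (hr : 2 ≤ r)
    (hrα : 2 * r * α ≤ 1) (n : ℕ) :
    0 < coeffDot (coinPoly α ^ r * coinPoly α ^ n) ((1 - X) * coinPoly α ^ n) := by
  refine coeffDot_mul_one_sub_X_mul_pos (fun j => ?_) ?_ ?_ ?_
  · rw [coeff_coinPoly_pow]
    have := sub_nonneg.2 hα1
    positivity
  · rwa [natDegree_pow, coinPoly, natDegree_linear hα0.ne', mul_one]
  · rw [derivative_pow, derivative_coinPoly, eval_mul, eval_mul, eval_C, eval_C, eval_pow,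
      eval_one_coinPoly, one_pow, mul_one, eval_pow, eval_one_coinPoly, one_pow]
    linarith
  · exact pow_ne_zero _ fun h => by simpa [h] using eval_one_coinPoly α

theorem competeProb_increasing_of_le_inv_two_r (r : ℕ) (hr : 2 ≤ r) (α : ℝ)
    (hα0 : 0 < α) (hα : α ≤ 1 / (2 * r)) :
    ∀ n : ℕ, competeProb α r 1 n < competeProb α r 1 (n + 1) := by
  intro n
  have hrα : 2 * r * α ≤ 1 := by
    rwa [le_div_iff₀ (by positivity), mul_comm] at hα
  have hα1 : α < 1 := by
    have : (2 : ℝ) ≤ r := by exact_mod_cast hr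
    nlinarith
  rw [← sub_pos, competeProb_succ_sub, coeff_competePoly_sub]
  exact mul_pos (mul_pos hα0 (sub_pos.2 hα1)) (coeffDot_coinPoly_pow_pos hα0 hα1.le hr hrα n)
end

section
/- For all positive integers r, d with d ≤ r, every α ∈ (0,1), and every nonnegative integer n, the duality relation p_n^{r,d}(α) = 1 − p_n^{r, r−d+1}(1−α) holds, where p_n^{r,d}(α) denotes the competing probability with success probability α. -/
open Finset Filter Topology

/-!
The summand of `competeProb` is the product `P(S'_n = i) · P(S_{n+r} = j)` of two binomial
weights, and all these products add up to `1`. The event `S ≥ S' + d` therefore has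
complement `S < S' + d`. Replacing `α` by `1 - α` exchanges successes and failures, i.e.
`(S, S')` by `(n + r - S, n - S')`, and under this substitution `S < S' + d` becomes
`S ≥ S' + (r - d + 1)`.
-/

noncomputable def binomWeight (α : ℝ) (m k : ℕ) : ℝ :=
  m.choose k * α ^ k * (1 - α) ^ (m - k)

lemma sum_range_binomWeight (α : ℝ) (m : ℕ) :
    ∑ k ∈ range (m + 1), binomWeight α m k = 1 := by
  have h := add_pow α (1 - α) m
  rw [add_sub_cancel, one_pow] at h
  rw [h]
  exact sum_congr rfl fun k _ => by rw [binomWeight]; ring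

lemma binomWeight_one_sub (α : ℝ) {m k : ℕ} (hk : k ≤ m) :
    binomWeight (1 - α) m (m - k) = binomWeight α m k := by
  rw [binomWeight, binomWeight, Nat.choose_symm hk, Nat.sub_sub_self hk, sub_sub_cancel]
  ring

lemma sum_Icc_binomWeight_one_sub (α : ℝ) (a m : ℕ) :
    ∑ j ∈ Icc a m, binomWeight (1 - α) m j = ∑ j ∈ range (m + 1 - a), binomWeight α m j := by
  have h := sum_Ico_reflect (binomWeight α m) a (le_refl (m + 1))
  rw [Nat.sub_self, Nat.Ico_zero_eq_range] at h
  rw [← h, ← Ico_add_one_right_eq_Icc]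
  refine sum_congr rfl fun j hj => ?_
  rw [← binomWeight_one_sub α (Nat.sub_le m j), Nat.sub_sub_self (by grind)]

lemma competeProb_eq_sum_binomWeight (α : ℝ) (r d n : ℕ) :
    competeProb α r d n = ∑ i ∈ range (n + 1), ∑ j ∈ Icc (i + d) (n + r),
      binomWeight α n i * binomWeight α (n + r) j := by
  refine sum_congr rfl fun i hi => sum_congr rfl fun j hj => ?_
  have hexp : 2 * n + r - i - j = (n - i) + (n + r - j) := by grind
  rw [binomWeight, binomWeight, hexp, pow_add, pow_add]
  ring

lemma competeProb_add_sum_lower (α : ℝ) {r d : ℕ} (hdr : d ≤ r + 1) (n : ℕ) :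
    competeProb α r d n + ∑ i ∈ range (n + 1), ∑ j ∈ range (i + d),
      binomWeight α n i * binomWeight α (n + r) j = 1 := by
  have hsplit : ∀ i ∈ range (n + 1),
      ∑ j ∈ Icc (i + d) (n + r), binomWeight α n i * binomWeight α (n + r) j
        + ∑ j ∈ range (i + d), binomWeight α n i * binomWeight α (n + r) j
        = binomWeight α n i * ∑ j ∈ range (n + r + 1), binomWeight α (n + r) j := by
    intro i hi
    rw [add_comm, ← Ico_add_one_right_eq_Icc, sum_range_add_sum_Ico _ (by grind), mul_sum]
  rw [competeProb_eq_sum_binomWeight, ← sum_add_distrib, sum_congr rfl hsplit, ← sum_mul,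
    sum_range_binomWeight, sum_range_binomWeight, one_mul]

lemma competeProb_one_sub_eq_sum_lower (α : ℝ) {r d : ℕ} (hdr : d ≤ r) (n : ℕ) :
    competeProb (1 - α) r (r - d + 1) n = ∑ i ∈ range (n + 1), ∑ j ∈ range (i + d),
      binomWeight α n i * binomWeight α (n + r) j := by
  rw [competeProb_eq_sum_binomWeight, ← sum_range_reflect]
  refine sum_congr rfl fun i hi => ?_
  have hin : i ≤ n := by grind
  rw [Nat.add_sub_cancel, binomWeight_one_sub α hin, ← mul_sum, ← mul_sum,
    sum_Icc_binomWeight_one_sub, show n + r + 1 - (n - i + (r - d + 1)) = i + d by omega]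

theorem competeProb_duality_general (r d : ℕ) (hdr : d ≤ r) (α : ℝ) (n : ℕ) :
    competeProb α r d n = 1 - competeProb (1 - α) r (r - d + 1) n := by
  rw [competeProb_one_sub_eq_sum_lower α hdr,
    ← competeProb_add_sum_lower α (Nat.le_succ_of_le hdr) n]
  ring

theorem competeProb_duality (r d : ℕ) (hd : 1 ≤ d) (hdr : d ≤ r) (α : ℝ)
    (hα0 : 0 < α) (hα1 : α < 1) (n : ℕ) :
    competeProb α r d n = 1 - competeProb (1 - α) r (r - d + 1) n :=
  competeProb_duality_general r d hdr α n
end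

section
/- For every α ∈ (0,1), all positive integers r, d, and every nonnegative integer n, p_{n+1}^{r,d} − p_n^{r,d} = α(1−α) Σ_{i=0}^{r} P(S_r = i) ( q_n^{(i−d+1)} − q_n^{(i−d)} ), where P(S_r = i) = C(r,i) α^i (1−α)^{r−i} and q_n^{(k)} = P(S'_n − S_n = k) for independent binomial variables S_n, S'_n with n trials and success probability α. -/
/-!
Both sides are expectations of functions of `D = S_{n+r} - S'_n`: `p_n = E[1{D ≥ d}]`. One more
trial on each side adds `X - Y` to `D`, which is `±1` with probability `α(1-α)` each, so
`p_{n+1} - p_n` is `α(1-α)` times the expectation of the discrete Laplacian of `1{· ≥ d}`, namely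
`1{· = d-1} - 1{· = d}`. Splitting `S_{n+r}` into independent `S_n + S_r` and conditioning on
`S_r = i` gives `P(D = c) = ∑ᵢ P(S_r = i) q_n^{(c-i)}`, and `q_n` is even.
-/

open Finset Filter Topology

/-- The binomial probability `P(S_r = i) = C(r,i) α^i (1-α)^(r-i)`. -/
noncomputable def binomProb (α : ℝ) (r i : ℕ) : ℝ :=
  (r.choose i : ℝ) * α ^ i * (1 - α) ^ (r - i)

/-- `q α n k = P(S'_n - S_n = k)` for independent binomials `S_n, S'_n` with `n`
trials and success probability `α`, given by its explicit combinatorial formula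
(it depends on `k` only through `|k|`). -/
noncomputable def diffProb (α : ℝ) (n : ℕ) (k : ℤ) : ℝ :=
  ∑ i ∈ Finset.range (n - k.natAbs + 1),
    (n.choose i : ℝ) * (n.choose (i + k.natAbs) : ℝ) * α ^ (2 * i + k.natAbs) *
      (1 - α) ^ (2 * n - 2 * i - k.natAbs)

theorem binomProb_eq_zero_of_lt (α : ℝ) {N j : ℕ} (h : N < j) : binomProb α N j = 0 := by
  simp [binomProb, Nat.choose_eq_zero_of_lt h]

theorem binomProb_succ_zero (α : ℝ) (N : ℕ) :
    binomProb α (N + 1) 0 = (1 - α) * binomProb α N 0 := by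
  simp [binomProb, pow_succ, mul_comm]

theorem binomProb_succ_succ (α : ℝ) (N j : ℕ) :
    binomProb α (N + 1) (j + 1) = α * binomProb α N j + (1 - α) * binomProb α N (j + 1) := by
  simp only [binomProb, Nat.choose_succ_succ, Nat.cast_add, Nat.add_sub_add_right]
  rcases lt_or_ge j N with h | h
  · rw [show N - j = N - (j + 1) + 1 by omega]
    ring
  · rw [Nat.choose_eq_zero_of_lt (show N < j + 1 by omega), Nat.sub_eq_zero_of_le h,
      Nat.sub_eq_zero_of_le (show N ≤ j + 1 by omega)]
    ring

noncomputable def binomExpect (α : ℝ) (N : ℕ) (g : ℕ → ℝ) : ℝ :=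
  ∑ j ∈ range (N + 1), binomProb α N j * g j

theorem binomExpect_zero (α : ℝ) (g : ℕ → ℝ) : binomExpect α 0 g = g 0 := by
  simp [binomExpect, binomProb]

theorem binomExpect_sub (α : ℝ) (N : ℕ) (g h : ℕ → ℝ) :
    binomExpect α N (fun j => g j - h j) = binomExpect α N g - binomExpect α N h := by
  simp only [binomExpect, mul_sub, sum_sub_distrib]

theorem binomExpect_succ (α : ℝ) (N : ℕ) (g : ℕ → ℝ) :
    binomExpect α (N + 1) g =
      (1 - α) * binomExpect α N g + α * binomExpect α N (fun j => g (j + 1)) := by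
  have hshift : binomExpect α N g =
      ∑ j ∈ range (N + 1), binomProb α N (j + 1) * g (j + 1) + binomProb α N 0 * g 0 := by
    rw [binomExpect, ← sum_range_succ' (fun j => binomProb α N j * g j), sum_range_succ _ (N + 1),
      binomProb_eq_zero_of_lt α (Nat.lt_succ_self N), zero_mul, add_zero]
  rw [binomExpect, sum_range_succ', hshift, binomExpect]
  simp only [binomProb_succ_succ, binomProb_succ_zero, add_mul, sum_add_distrib, mul_assoc,
    ← mul_sum]
  ring

/-- `E[f(S_N - S'_n)]` for independent binomials `S_N`, `S'_n` with success probability `α`. -/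
noncomputable def diffExpect (α : ℝ) (N n : ℕ) (f : ℤ → ℝ) : ℝ :=
  binomExpect α N fun j => binomExpect α n fun i => f (j - i)

theorem diffExpect_comm (α : ℝ) (N n : ℕ) (f : ℤ → ℝ) :
    diffExpect α N n f = binomExpect α n fun i => binomExpect α N fun j => f (j - i) := by
  simp only [diffExpect, binomExpect, mul_sum]
  rw [sum_comm]
  exact sum_congr rfl fun _ _ => sum_congr rfl fun _ _ => by ring

theorem diffExpect_neg (α : ℝ) (N n : ℕ) (f : ℤ → ℝ) :
    diffExpect α N n (fun t => f (-t)) = diffExpect α n N f := by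
  rw [diffExpect_comm]
  simp only [diffExpect, neg_sub]

theorem diffExpect_sub (α : ℝ) (N n : ℕ) (f g : ℤ → ℝ) :
    diffExpect α N n (fun t => f t - g t) = diffExpect α N n f - diffExpect α N n g := by
  simp only [diffExpect, binomExpect_sub]

theorem diffExpect_succ_left (α : ℝ) (N n : ℕ) (f : ℤ → ℝ) :
    diffExpect α (N + 1) n f =
      (1 - α) * diffExpect α N n f + α * diffExpect α N n (fun t => f (t + 1)) := by
  simp only [diffExpect, binomExpect_succ α N, Nat.cast_succ, add_sub_right_comm]

theorem diffExpect_succ_right (α : ℝ) (N n : ℕ) (f : ℤ → ℝ) :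
    diffExpect α N (n + 1) f =
      (1 - α) * diffExpect α N n f + α * diffExpect α N n (fun t => f (t - 1)) := by
  simp only [diffExpect_comm, binomExpect_succ α n, Nat.cast_succ, sub_add_eq_sub_sub]

theorem diffExpect_succ_succ_sub (α : ℝ) (N n : ℕ) (f : ℤ → ℝ) :
    diffExpect α (N + 1) (n + 1) f - diffExpect α N n f =
      α * (1 - α) * diffExpect α N n (fun t => (f (t + 1) - f t) - (f t - f (t - 1))) := by
  rw [diffExpect_sub, diffExpect_sub, diffExpect_sub, diffExpect_succ_left, diffExpect_succ_right,
    diffExpect_succ_right]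
  simp only [sub_add_cancel]
  ring

theorem diffExpect_add_left (α : ℝ) (N n r : ℕ) (f : ℤ → ℝ) :
    diffExpect α (N + r) n f = binomExpect α r fun i => diffExpect α N n fun t => f (t + i) := by
  induction r generalizing f with
  | zero => simp [binomExpect_zero]
  | succ r ih =>
    rw [← add_assoc, diffExpect_succ_left, ih, ih, binomExpect_succ]
    simp only [Nat.cast_succ, add_assoc]

theorem binomProb_mul_binomProb_add (α : ℝ) (n i m : ℕ) :
    binomProb α n i * binomProb α n (i + m) =
      (n.choose i : ℝ) * (n.choose (i + m) : ℝ) * α ^ (2 * i + m) *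
        (1 - α) ^ (2 * n - 2 * i - m) := by
  by_cases h : i + m ≤ n
  · rw [binomProb, binomProb, show 2 * i + m = i + (i + m) by omega,
      show 2 * n - 2 * i - m = (n - i) + (n - (i + m)) by omega, pow_add, pow_add]
    ring
  · simp [binomProb, Nat.choose_eq_zero_of_lt (show n < i + m by omega)]

theorem diffExpect_indicator_natCast (α : ℝ) (n m : ℕ) :
    diffExpect α n n (fun t => if t = m then 1 else 0) = diffProb α n m := by
  have hinner : ∀ i : ℕ, (binomExpect α n fun j => if (j : ℤ) - i = m then 1 else 0) =
      binomProb α n (i + m) := by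
    intro i
    simp only [binomExpect, sub_eq_iff_eq_add, ← Nat.cast_add, Nat.cast_inj, add_comm (m : ℕ),
      mul_ite, mul_one, mul_zero, sum_ite_eq', mem_range]
    split_ifs with h
    · rfl
    · exact (binomProb_eq_zero_of_lt α (by omega)).symm
  rw [diffExpect_comm, binomExpect]
  simp only [hinner, diffProb, Int.natAbs_natCast, ← binomProb_mul_binomProb_add]
  refine (sum_subset (range_subset_range.mpr (by omega)) fun i hi hi' => ?_).symm
  simp only [mem_range] at hi hi'
  rw [binomProb_eq_zero_of_lt α (by omega : n < i + m), mul_zero]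

theorem diffProb_neg (α : ℝ) (n : ℕ) (k : ℤ) : diffProb α n (-k) = diffProb α n k := by
  simp only [diffProb, Int.natAbs_neg]

theorem diffExpect_indicator (α : ℝ) (n : ℕ) (k : ℤ) :
    diffExpect α n n (fun t => if t = k then 1 else 0) = diffProb α n k := by
  rcases Int.natAbs_eq k with hk | hk <;> rw [hk]
  · exact diffExpect_indicator_natCast α n k.natAbs
  · rw [diffProb_neg, ← diffExpect_indicator_natCast, ← diffExpect_neg]
    simp only [neg_inj]

theorem competeProb_eq_diffExpect (α : ℝ) (r d n : ℕ) :
    competeProb α r d n = diffExpect α (n + r) n (fun t => if (d : ℤ) ≤ t then 1 else 0) := by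
  rw [diffExpect_comm, competeProb, binomExpect]
  refine sum_congr rfl fun i hi => ?_
  have hfilter :
      (range (n + r + 1)).filter (fun j : ℕ => (d : ℤ) ≤ j - i) = Icc (i + d) (n + r) := by
    ext j
    simp only [mem_filter, mem_range, mem_Icc]
    omega
  rw [binomExpect, mul_sum]
  simp only [mul_ite, mul_one, mul_zero, ← sum_filter, hfilter]
  refine sum_congr rfl fun j hj => ?_
  simp only [mem_range, mem_Icc] at hi hj
  rw [binomProb, binomProb, show 2 * n + r - i - j = (n - i) + (n + r - j) by omega, pow_add,
    pow_add]
  ring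

theorem competeProb_one_step_back_general (α : ℝ) (r d : ℕ) (n : ℕ) :
    competeProb α r d (n + 1) - competeProb α r d n =
      α * (1 - α) * ∑ i ∈ Finset.range (r + 1),
        binomProb α r i *
          (diffProb α n ((i : ℤ) - d + 1) - diffProb α n ((i : ℤ) - d)) := by
  have hlaplacian : ∀ t : ℤ,
      ((if (d : ℤ) ≤ t + 1 then 1 else 0) - (if (d : ℤ) ≤ t then 1 else 0)) -
          ((if (d : ℤ) ≤ t then 1 else 0) - (if (d : ℤ) ≤ t - 1 then 1 else 0)) =
        (if t = d - 1 then (1 : ℝ) else 0) - (if t = d then 1 else 0) := by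
    intro t
    split_ifs <;> first | omega | norm_num
  have hshift : ∀ (i : ℕ) (c : ℤ),
      diffExpect α n n (fun t => if t + i = c then 1 else 0) = diffProb α n (i - c) := by
    intro i c
    rw [← diffProb_neg, neg_sub, ← diffExpect_indicator]
    simp only [eq_sub_iff_add_eq]
  rw [competeProb_eq_diffExpect, competeProb_eq_diffExpect, show n + 1 + r = n + r + 1 by omega,
    diffExpect_succ_succ_sub]
  simp only [hlaplacian]
  rw [diffExpect_add_left, binomExpect]
  congr 1
  refine sum_congr rfl fun i _ => ?_
  rw [diffExpect_sub, hshift, hshift, show (i : ℤ) - d + 1 = i - (d - 1) by ring]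

theorem competeProb_one_step_back (α : ℝ) (hα : α ∈ Set.Ioo (0 : ℝ) 1)
    (r d : ℕ) (hr : 1 ≤ r) (hd : 1 ≤ d) (n : ℕ) :
    competeProb α r d (n + 1) - competeProb α r d n =
      α * (1 - α) * ∑ i ∈ Finset.range (r + 1),
        binomProb α r i *
          (diffProb α n ((i : ℤ) - d + 1) - diffProb α n ((i : ℤ) - d)) :=
  competeProb_one_step_back_general α r d n
end
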